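/- arXiv:1112.0648 — 2 statements merged into one kernel-verified Lean document; each statement's English description precedes it below -/
import Mathlib

section
/- The Pfaff–Saalschütz identity: for a nonnegative integer n and parameters a, b, c (real, with c and 1+a+b-n-c avoiding nonpositive-integer degeneracies making denominators vanish within the summation range), Σ_{j=0}^{n} [(-n)_j (a)_j (b)_j] / [(c)_j (1+a+b-c-n)_j j!] = (c-a)_n (c-b)_n / [(c)_n (c-a-b)_n]. -/
/-!
Since `(-n)_j = (-1)^j j! C(n, j)`, `(c)_n = (c)_j (c + j)_(n-j)` and, by the reflection
`(x)_m = (-1)^m (1 - x - m)_m`, `(c - a - b)_n = (-1)^j (1 + a + b - c - n)_j (c - a - b)_(n-j)`,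
multiplying by `(c)_n (c - a - b)_n` turns the identity into the polynomial identity
`S_n := ∑ j, C(n, j) (a)_j (b)_j (c + j)_(n-j) (c - a - b)_(n-j) = (c - a)_n (c - b)_n`.
Zeilberger's algorithm produces a certificate whose telescoping differences relate the summands
of `S_(n+1)` and `S_n`, which gives `S_(n+1) = (c - a + n) (c - b + n) S_n`.
-/

open Finset Polynomial

section Pochhammer

variable {R : Type*}

theorem ascPochhammer_eval_add [CommSemiring R] (j m : ℕ) (x : R) :
    (ascPochhammer R (j + m)).eval x =
      (ascPochhammer R j).eval x * (ascPochhammer R m).eval (x + j) := by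
  rw [← ascPochhammer_mul, eval_mul, eval_comp, eval_add, eval_X, eval_natCast]

theorem ascPochhammer_succ_left_eval [CommSemiring R] (m : ℕ) (x : R) :
    (ascPochhammer R (m + 1)).eval x = x * (ascPochhammer R m).eval (x + 1) := by
  rw [add_comm, ascPochhammer_eval_add, ascPochhammer_one, eval_X, Nat.cast_one]

theorem ascPochhammer_eval_reflect [CommRing R] (m : ℕ) (x : R) :
    (ascPochhammer R m).eval x = (-1) ^ m * (ascPochhammer R m).eval (1 - x - m) := by
  rw [show 1 - x - m = -(x + m - 1) by ring, ascPochhammer_eval_neg_eq_descPochhammer,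
    descPochhammer_eval_eq_ascPochhammer, ← mul_assoc, ← mul_pow, neg_one_mul, neg_neg, one_pow,
    one_mul, show x + m - 1 - m + 1 = x by ring]

theorem ascPochhammer_eval_neg_natCast [CommRing R] (n j : ℕ) :
    (ascPochhammer R j).eval (-(n : R)) = (-1) ^ j * j.factorial * n.choose j := by
  rw [ascPochhammer_eval_neg_eq_descPochhammer, descPochhammer_eval_eq_descFactorial,
    Nat.descFactorial_eq_factorial_mul_choose, Nat.cast_mul, mul_assoc]

end Pochhammer

section Saalschutz

variable {R : Type*} [CommRing R]

noncomputable def saalschutzTerm (a b c : R) (n j : ℕ) : R :=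
  n.choose j * (ascPochhammer R j).eval a * (ascPochhammer R j).eval b *
    (ascPochhammer R (n - j)).eval (c + j) * (ascPochhammer R (n - j)).eval (c - a - b)

noncomputable def saalschutzCert (a b c : R) (n j : ℕ) : R :=
  j * (n + 1).choose j * (ascPochhammer R j).eval a * (ascPochhammer R j).eval b *
    (ascPochhammer R (n + 1 - j)).eval (c - 1 + j) *
    (ascPochhammer R (n + 1 - j)).eval (c - a - b)

theorem saalschutzTerm_wz_step (a b c : R) {n j : ℕ} (hj : j ≤ n + 1) :
    (n + 1) * ((c - a + n) * (c - b + n) * saalschutzTerm a b c n j -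
        saalschutzTerm a b c (n + 1) j) =
      saalschutzCert a b c n (j + 1) - saalschutzCert a b c n j := by
  rcases hj.lt_or_eq with hjn | rfl
  · obtain ⟨m, rfl⟩ := Nat.exists_eq_add_of_le (Nat.le_of_lt_succ hjn)
    have hchoose_succ_succ : ((j + 1 : ℕ) : R) * ((j + m + 1).choose (j + 1) : ℕ) =
        ((j + m + 1 : ℕ) : R) * ((j + m).choose j : ℕ) := by
      rw [← Nat.cast_mul, ← Nat.cast_mul, mul_comm, ← Nat.add_one_mul_choose_eq]
    have hchoose_succ : ((m + 1 : ℕ) : R) * ((j + m + 1).choose j : ℕ) =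
        ((j + m + 1 : ℕ) : R) * ((j + m).choose j : ℕ) := by
      have h := Nat.choose_mul_succ_eq (j + m) j
      rw [show j + m + 1 - j = m + 1 by omega, mul_comm] at h
      rw [← Nat.cast_mul, ← Nat.cast_mul, mul_comm, ← h]
    simp only [saalschutzTerm, saalschutzCert, show j + m + 1 - j = m + 1 by omega,
      show j + m - j = m by omega, show j + m + 1 - (j + 1) = m by omega]
    rw [ascPochhammer_succ_left_eval m (c - 1 + j)]
    simp only [ascPochhammer_succ_eval]
    push_cast at hchoose_succ_succ hchoose_succ ⊢
    rw [show c - 1 + (j + 1) = c + j by ring, show c - 1 + j + 1 = c + j by ring]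
    set A := (ascPochhammer R j).eval a
    set B := (ascPochhammer R j).eval b
    set P := (ascPochhammer R m).eval (c + j)
    set Q := (ascPochhammer R m).eval (c - a - b)
    linear_combination (-(a + j) * (b + j) * A * B * P * Q) * hchoose_succ_succ +
      (-(c - a - b + m) * (c + 2 * j + m) * A * B * P * Q) * hchoose_succ
  · simp [saalschutzTerm, saalschutzCert, Nat.choose_succ_self, mul_assoc]

variable [IsDomain R] [CharZero R]

theorem sum_range_saalschutzTerm_succ (a b c : R) (n : ℕ) :
    ∑ j ∈ range (n + 2), saalschutzTerm a b c (n + 1) j =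
      (c - a + n) * (c - b + n) * ∑ j ∈ range (n + 1), saalschutzTerm a b c n j := by
  have htel : ∑ j ∈ range (n + 2), (n + 1) * ((c - a + n) * (c - b + n) *
      saalschutzTerm a b c n j - saalschutzTerm a b c (n + 1) j) = 0 := by
    rw [sum_congr rfl fun j hj =>
        saalschutzTerm_wz_step a b c (Nat.lt_succ_iff.mp (mem_range.mp hj)), sum_range_sub]
    simp [saalschutzCert, Nat.choose_succ_self]
  rw [← mul_sum, sum_sub_distrib, ← mul_sum, sum_range_succ (saalschutzTerm a b c n)] at htel
  have hvanish : saalschutzTerm a b c n (n + 1) = 0 := by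
    simp [saalschutzTerm, Nat.choose_succ_self]
  rw [hvanish, add_zero] at htel
  have hn : (n + 1 : R) ≠ 0 := n.cast_add_one_ne_zero
  linear_combination -(mul_eq_zero.mp htel).resolve_left hn

theorem sum_range_saalschutzTerm (a b c : R) (n : ℕ) :
    ∑ j ∈ range (n + 1), saalschutzTerm a b c n j =
      (ascPochhammer R n).eval (c - a) * (ascPochhammer R n).eval (c - b) := by
  induction n with
  | zero => simp [saalschutzTerm]
  | succ n ih =>
    rw [sum_range_saalschutzTerm_succ, ih, ascPochhammer_succ_eval, ascPochhammer_succ_eval]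
    ring

end Saalschutz

theorem saalschutz_summand_eq {K : Type*} [Field K] [CharZero K] (a b c : K) {n j : ℕ}
    (hj : j ≤ n) (hc : (ascPochhammer K n).eval c ≠ 0)
    (he : (ascPochhammer K n).eval (c - a - b) ≠ 0) :
    (ascPochhammer K j).eval (-(n : K)) * (ascPochhammer K j).eval a *
          (ascPochhammer K j).eval b /
        ((ascPochhammer K j).eval c * (ascPochhammer K j).eval (1 + a + b - c - n) *
          j.factorial) =
      saalschutzTerm a b c n j /
        ((ascPochhammer K n).eval c * (ascPochhammer K n).eval (c - a - b)) := by
  obtain ⟨m, rfl⟩ := Nat.exists_eq_add_of_le hj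
  have he' : (ascPochhammer K (j + m)).eval (c - a - b) =
      (ascPochhammer K m).eval (c - a - b) * (ascPochhammer K j).eval (c - a - b + m) := by
    rw [add_comm, ascPochhammer_eval_add]
  have hd : (ascPochhammer K j).eval (1 + a + b - c - ((j + m : ℕ) : K)) =
      (-1) ^ j * (ascPochhammer K j).eval (c - a - b + m) := by
    rw [ascPochhammer_eval_reflect]
    congr 2
    push_cast
    ring
  rw [ascPochhammer_eval_add j m c] at hc ⊢
  rw [he'] at he ⊢
  rw [saalschutzTerm, Nat.add_sub_cancel_left, ascPochhammer_eval_neg_natCast, hd]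
  obtain ⟨hcj, hcm⟩ := mul_ne_zero_iff.mp hc
  obtain ⟨hem, hej⟩ := mul_ne_zero_iff.mp he
  have hfac : (j.factorial : K) ≠ 0 := Nat.cast_ne_zero.mpr j.factorial_ne_zero
  field_simp

theorem pfaff_saalschutz_general (n : ℕ) (a b c : ℝ)
    (hc : ∀ j ≤ n, (ascPochhammer ℝ j).eval c ≠ 0)
    (he : (ascPochhammer ℝ n).eval (c - a - b) ≠ 0) :
    ∑ j ∈ Finset.range (n + 1),
      ((ascPochhammer ℝ j).eval (-(n : ℝ)) * (ascPochhammer ℝ j).eval a *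
          (ascPochhammer ℝ j).eval b) /
        ((ascPochhammer ℝ j).eval c * (ascPochhammer ℝ j).eval (1 + a + b - c - n) *
          (j.factorial : ℝ)) =
    ((ascPochhammer ℝ n).eval (c - a) * (ascPochhammer ℝ n).eval (c - b)) /
      ((ascPochhammer ℝ n).eval c * (ascPochhammer ℝ n).eval (c - a - b)) := by
  rw [sum_congr rfl fun j hj =>
      saalschutz_summand_eq a b c (Nat.lt_succ_iff.mp (mem_range.mp hj)) (hc n le_rfl) he,
    ← sum_div, sum_range_saalschutzTerm]

/-- The Pfaff–Saalschütz identity. -/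
theorem pfaff_saalschutz (n : ℕ) (a b c : ℝ)
    (hc : ∀ j ≤ n, (ascPochhammer ℝ j).eval c ≠ 0)
    (hd : ∀ j ≤ n, (ascPochhammer ℝ j).eval (1 + a + b - c - n) ≠ 0)
    (he : (ascPochhammer ℝ n).eval (c - a - b) ≠ 0) :
    ∑ j ∈ Finset.range (n + 1),
      ((ascPochhammer ℝ j).eval (-(n : ℝ)) * (ascPochhammer ℝ j).eval a *
          (ascPochhammer ℝ j).eval b) /
        ((ascPochhammer ℝ j).eval c * (ascPochhammer ℝ j).eval (1 + a + b - c - n) *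
          (j.factorial : ℝ)) =
    ((ascPochhammer ℝ n).eval (c - a) * (ascPochhammer ℝ n).eval (c - b)) /
      ((ascPochhammer ℝ n).eval c * (ascPochhammer ℝ n).eval (c - a - b)) :=
  pfaff_saalschutz_general n a b c hc he
end

section
/- For integers a, b ≥ 0 and α ≥ 0, the polynomial Z(z) = Σ_{i=0}^{min(a,b)} [(-a)_i (-b)_i] / [(-α-a-b)_i i!] · |z|^{2i} (z|η)^{a-i} (z|η)̄^{b-i} on ℂⁿ (with n = α+2 and η a fixed unit vector) is harmonic: Δ Z = 0, where Δ = 4 Σ_{j=1}^n ∂²/∂z_j∂z̄_j. -/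
/-- The Wirtinger derivative ∂/∂z_j on functions of n complex variables. -/
noncomputable def wD {n : ℕ} (j : Fin n) (f : (Fin n → ℂ) → ℂ) : (Fin n → ℂ) → ℂ :=
  fun z => (1 / 2) * (fderiv ℝ f z (Pi.single j 1) - Complex.I * fderiv ℝ f z (Pi.single j Complex.I))

/-- The Wirtinger derivative ∂/∂z̄_j on functions of n complex variables. -/
noncomputable def wDBar {n : ℕ} (j : Fin n) (f : (Fin n → ℂ) → ℂ) : (Fin n → ℂ) → ℂ :=
  fun z => (1 / 2) * (fderiv ℝ f z (Pi.single j 1) + Complex.I * fderiv ℝ f z (Pi.single j Complex.I))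

/-- The Euclidean Laplacian on ℝ^{2n} ≅ ℂⁿ in complex coordinates: Δ = 4 Σ_j ∂²/∂z_j∂z̄_j. -/
noncomputable def cLap {n : ℕ} (f : (Fin n → ℂ) → ℂ) : (Fin n → ℂ) → ℂ :=
  fun z => 4 * ∑ j : Fin n, wD j (wDBar j f) z

/-!
With `Q = |z|²` and `P = (z|η)`, the Wirtinger rules `∂_j Q = z̄_j`, `∂̄_j Q = z_j`,
`∂_j P = η̄_j`, `∂̄_j P = 0` give, for the monomial `M_{i,s,t} = Q^i P^s P̄^t` on `ℂⁿ`,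
`Δ M_{i,s,t} / 4 = i (n + i - 1 + s + t) M_{i-1,s,t} + s t |η|² M_{i,s-1,t-1}`.
In `Z = Σ_i c_i M_{i,a-i,b-i}` with `|η| = 1`, the second term of the `i`-th summand cancels the
first term of the `(i+1)`-st, because the `₂F₁(-a,-b;-α-a-b)` coefficients satisfy
`c_{i+1} (i+1) (α+a+b-i) = -c_i (a-i) (b-i)`; so `ΔZ` telescopes to `0`.
-/

open ComplexConjugate

variable {n : ℕ}

-- `D j` and `DB j` are the Wirtinger derivatives `∂f/∂z_j` and `∂f/∂z̄_j` (see `wD_eq`).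
def HasWirtinger (f : (Fin n → ℂ) → ℂ) (D DB : Fin n → (Fin n → ℂ) → ℂ) : Prop :=
  ∀ z, ∃ L : (Fin n → ℂ) →L[ℝ] ℂ, HasFDerivAt f L z ∧
    ∀ v, L v = ∑ j, (D j z * v j + DB j z * conj (v j))

namespace HasWirtinger

variable {f g : (Fin n → ℂ) → ℂ} {D DB Dg DBg : Fin n → (Fin n → ℂ) → ℂ}

theorem congr (h : HasWirtinger f D DB) {D' DB' : Fin n → (Fin n → ℂ) → ℂ}
    (hD : ∀ j z, D j z = D' j z) (hDB : ∀ j z, DB j z = DB' j z) : HasWirtinger f D' DB' := by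
  intro z
  obtain ⟨L, hL, hLv⟩ := h z
  exact ⟨L, hL, fun v => by simp only [hLv, hD, hDB]⟩

theorem differentiable (h : HasWirtinger f D DB) : Differentiable ℝ f := fun z =>
  let ⟨_, hL, _⟩ := h z; hL.differentiableAt

theorem wD_eq (h : HasWirtinger f D DB) (j : Fin n) : wD j f = D j := by
  funext z
  obtain ⟨L, hL, hLv⟩ := h z
  simp only [wD, hL.fderiv, hLv, Pi.single_apply, apply_ite conj, map_one, map_zero,
    Complex.conj_I, mul_ite, mul_one, mul_zero, Finset.sum_add_distrib,
    Finset.sum_ite_eq' Finset.univ j, Finset.mem_univ, if_true]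
  linear_combination ((DB j z - D j z) / 2) * Complex.I_mul_I

theorem wDBar_eq (h : HasWirtinger f D DB) (j : Fin n) : wDBar j f = DB j := by
  funext z
  obtain ⟨L, hL, hLv⟩ := h z
  simp only [wDBar, hL.fderiv, hLv, Pi.single_apply, apply_ite conj, map_one, map_zero,
    Complex.conj_I, mul_ite, mul_one, mul_zero, Finset.sum_add_distrib,
    Finset.sum_ite_eq' Finset.univ j, Finset.mem_univ, if_true]
  linear_combination ((D j z - DB j z) / 2) * Complex.I_mul_I

theorem add (hf : HasWirtinger f D DB) (hg : HasWirtinger g Dg DBg) :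
    HasWirtinger (fun z => f z + g z) (fun j z => D j z + Dg j z)
      (fun j z => DB j z + DBg j z) := by
  intro z
  obtain ⟨Lf, hLf, hLfv⟩ := hf z
  obtain ⟨Lg, hLg, hLgv⟩ := hg z
  refine ⟨Lf + Lg, hLf.add hLg, fun v => ?_⟩
  simp only [add_apply, hLfv, hLgv, ← Finset.sum_add_distrib]
  exact Finset.sum_congr rfl fun j _ => by ring

theorem mul (hf : HasWirtinger f D DB) (hg : HasWirtinger g Dg DBg) :
    HasWirtinger (fun z => f z * g z) (fun j z => f z * Dg j z + g z * D j z)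
      (fun j z => f z * DBg j z + g z * DB j z) := by
  intro z
  obtain ⟨Lf, hLf, hLfv⟩ := hf z
  obtain ⟨Lg, hLg, hLgv⟩ := hg z
  refine ⟨f z • Lg + g z • Lf, hLf.mul hLg, fun v => ?_⟩
  simp only [add_apply, smul_apply, smul_eq_mul,
    hLfv, hLgv, Finset.mul_sum, ← Finset.sum_add_distrib]
  exact Finset.sum_congr rfl fun j _ => by ring

end HasWirtinger

theorem HasWirtinger.conj {f : (Fin n → ℂ) → ℂ} {D DB : Fin n → (Fin n → ℂ) → ℂ}
    (h : HasWirtinger f D DB) :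
    HasWirtinger (fun z => conj (f z)) (fun j z => conj (DB j z)) (fun j z => conj (D j z)) := by
  intro z
  obtain ⟨L, hL, hLv⟩ := h z
  refine ⟨Complex.conjCLE.toContinuousLinearMap.comp L,
    Complex.conjCLE.toContinuousLinearMap.hasFDerivAt.comp z hL, fun v => ?_⟩
  simp only [ContinuousLinearMap.coe_comp, Function.comp_apply, ContinuousLinearEquiv.coe_coe,
    Complex.conjCLE_apply, hLv, map_sum, map_add, map_mul, Complex.conj_conj]
  exact Finset.sum_congr rfl fun j _ => add_comm _ _

theorem hasWirtinger_const (c : ℂ) :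
    HasWirtinger (n := n) (fun _ => c) (fun _ _ => 0) (fun _ _ => 0) :=
  fun z => ⟨0, hasFDerivAt_const c z, by simp⟩

theorem hasWirtinger_apply (k : Fin n) :
    HasWirtinger (fun z => z k) (fun j _ => if j = k then 1 else 0) (fun _ _ => 0) := by
  intro z
  let p := (ContinuousLinearMap.proj k : (Fin n → ℂ) →L[ℂ] ℂ).restrictScalars ℝ
  exact ⟨p, p.hasFDerivAt, fun v => by simp [p, ite_mul]⟩

theorem hasWirtinger_sum {ι : Type*} (s : Finset ι) {f : ι → (Fin n → ℂ) → ℂ}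
    {D DB : ι → Fin n → (Fin n → ℂ) → ℂ} (h : ∀ i ∈ s, HasWirtinger (f i) (D i) (DB i)) :
    HasWirtinger (fun z => ∑ i ∈ s, f i z) (fun j z => ∑ i ∈ s, D i j z)
      (fun j z => ∑ i ∈ s, DB i j z) := by
  classical
  induction s using Finset.induction with
  | empty => simpa using hasWirtinger_const (n := n) 0
  | insert i s hi ih =>
    simp only [Finset.sum_insert hi]
    exact (h i (Finset.mem_insert_self i s)).add
      (ih fun k hk => h k (Finset.mem_insert_of_mem hk))

theorem natCast_mul_pow_pred_mul {R : Type*} [CommSemiring R] (m : ℕ) (x : R) :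
    (m : R) * x ^ (m - 1) * x = m * x ^ m := by
  cases m <;> simp [pow_succ, mul_assoc]

theorem HasWirtinger.pow {f : (Fin n → ℂ) → ℂ} {D DB : Fin n → (Fin n → ℂ) → ℂ}
    (h : HasWirtinger f D DB) (m : ℕ) :
    HasWirtinger (fun z => f z ^ m) (fun j z => m * f z ^ (m - 1) * D j z)
      (fun j z => m * f z ^ (m - 1) * DB j z) := by
  induction m with
  | zero => simpa using hasWirtinger_const (n := n) 1
  | succ m ih =>
    simp only [pow_succ]
    refine (ih.mul h).congr (fun j z => ?_) (fun j z => ?_)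
    · rw [Nat.add_sub_cancel]
      push_cast
      linear_combination D j z * natCast_mul_pow_pred_mul m (f z)
    · rw [Nat.add_sub_cancel]
      push_cast
      linear_combination DB j z * natCast_mul_pow_pred_mul m (f z)

theorem fderiv_sum_const_mul {E ι : Type*} [NormedAddCommGroup E] [NormedSpace ℝ E]
    (s : Finset ι) (c : ι → ℂ) {f : ι → E → ℂ} {z : E} (hf : ∀ i ∈ s, DifferentiableAt ℝ (f i) z) :
    fderiv ℝ (fun w => ∑ i ∈ s, c i * f i w) z = ∑ i ∈ s, c i • fderiv ℝ (f i) z := by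
  rw [fderiv_fun_sum fun i hi => (hf i hi).const_mul (c i)]
  exact Finset.sum_congr rfl fun i hi => fderiv_const_mul (hf i hi) (c i)

theorem wD_sum_const_mul {ι : Type*} (s : Finset ι) (c : ι → ℂ)
    {f : ι → (Fin n → ℂ) → ℂ} {z : Fin n → ℂ} (hf : ∀ i ∈ s, DifferentiableAt ℝ (f i) z)
    (j : Fin n) : wD j (fun w => ∑ i ∈ s, c i * f i w) z = ∑ i ∈ s, c i * wD j (f i) z := by
  simp only [wD, fderiv_sum_const_mul s c hf, sum_apply,
    smul_apply, smul_eq_mul, Finset.mul_sum, ← Finset.sum_sub_distrib]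
  exact Finset.sum_congr rfl fun i _ => by ring

theorem wDBar_sum_const_mul {ι : Type*} (s : Finset ι) (c : ι → ℂ)
    {f : ι → (Fin n → ℂ) → ℂ} {z : Fin n → ℂ} (hf : ∀ i ∈ s, DifferentiableAt ℝ (f i) z)
    (j : Fin n) : wDBar j (fun w => ∑ i ∈ s, c i * f i w) z = ∑ i ∈ s, c i * wDBar j (f i) z := by
  simp only [wDBar, fderiv_sum_const_mul s c hf, sum_apply,
    smul_apply, smul_eq_mul, Finset.mul_sum, ← Finset.sum_add_distrib]
  exact Finset.sum_congr rfl fun i _ => by ring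

theorem cLap_sum_const_mul {ι : Type*} (s : Finset ι) (c : ι → ℂ)
    {f : ι → (Fin n → ℂ) → ℂ} (hf : ∀ i ∈ s, Differentiable ℝ (f i))
    (hf' : ∀ i ∈ s, ∀ j, Differentiable ℝ (wDBar j (f i))) (z : Fin n → ℂ) :
    cLap (fun w => ∑ i ∈ s, c i * f i w) z = ∑ i ∈ s, c i * cLap (f i) z := by
  have hbar : ∀ j, wDBar j (fun w => ∑ i ∈ s, c i * f i w) =
      fun w => ∑ i ∈ s, c i * wDBar j (f i) w := fun j => funext fun w =>
    wDBar_sum_const_mul s c (fun i hi => (hf i hi) w) j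
  simp only [cLap, hbar, wD_sum_const_mul s c (fun i hi => hf' i hi _ z), Finset.mul_sum]
  rw [Finset.sum_comm]
  exact Finset.sum_congr rfl fun i _ => Finset.sum_congr rfl fun j _ => by ring

def hermProd (z w : Fin n → ℂ) : ℂ := ∑ j, z j * conj (w j)

theorem conj_hermProd (z w : Fin n → ℂ) : conj (hermProd z w) = hermProd w z := by
  simp only [hermProd, map_sum, map_mul, Complex.conj_conj, mul_comm]

theorem hasWirtinger_hermProd_self :
    HasWirtinger (n := n) (fun z => hermProd z z) (fun j z => conj (z j)) (fun j z => z j) := by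
  refine (hasWirtinger_sum Finset.univ fun k _ =>
    (hasWirtinger_apply k).mul (hasWirtinger_apply k).conj).congr ?_ ?_ <;>
  · intro j z
    simp [apply_ite conj, mul_ite]

theorem hasWirtinger_hermProd_left (w : Fin n → ℂ) :
    HasWirtinger (fun z => hermProd z w) (fun j _ => conj (w j)) (fun _ _ => 0) := by
  refine (hasWirtinger_sum Finset.univ fun k _ =>
    (hasWirtinger_apply k).mul (hasWirtinger_const (conj (w k)))).congr ?_ ?_ <;>
  · intro j z
    simp [mul_ite]

def zonalMonomial (η : Fin n → ℂ) (i s t : ℕ) (z : Fin n → ℂ) : ℂ :=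
  hermProd z z ^ i * hermProd z η ^ s * conj (hermProd z η) ^ t

section

variable (η : Fin n → ℂ) (i s t : ℕ)

theorem hasWirtinger_zonalMonomial :
    HasWirtinger (zonalMonomial η i s t)
      (fun j z => i * conj (z j) * zonalMonomial η (i - 1) s t z +
        s * conj (η j) * zonalMonomial η i (s - 1) t z)
      (fun j z => i * z j * zonalMonomial η (i - 1) s t z +
        t * η j * zonalMonomial η i s (t - 1) z) := by
  refine ((hasWirtinger_hermProd_self.pow i).mul
    ((hasWirtinger_hermProd_left η).pow s)).mul ((hasWirtinger_hermProd_left η).conj.pow t)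
    |>.congr ?_ ?_ <;>
  · intro j z
    simp only [zonalMonomial, map_zero, Complex.conj_conj]
    ring

theorem natCast_mul_hermProd_self_mul_zonalMonomial (z : Fin n → ℂ) :
    (i : ℂ) * (hermProd z z * zonalMonomial η (i - 1) s t z) = i * zonalMonomial η i s t z := by
  simp only [zonalMonomial]
  linear_combination hermProd z η ^ s * conj (hermProd z η) ^ t *
    natCast_mul_pow_pred_mul i (hermProd z z)

theorem natCast_mul_hermProd_mul_zonalMonomial (z : Fin n → ℂ) :
    (s : ℂ) * (hermProd z η * zonalMonomial η i (s - 1) t z) = s * zonalMonomial η i s t z := by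
  simp only [zonalMonomial]
  linear_combination hermProd z z ^ i * conj (hermProd z η) ^ t *
    natCast_mul_pow_pred_mul s (hermProd z η)

theorem natCast_mul_conj_hermProd_mul_zonalMonomial (z : Fin n → ℂ) :
    (t : ℂ) * (conj (hermProd z η) * zonalMonomial η i s (t - 1) z) =
      t * zonalMonomial η i s t z := by
  simp only [zonalMonomial]
  linear_combination hermProd z z ^ i * hermProd z η ^ s *
    natCast_mul_pow_pred_mul t (conj (hermProd z η))

theorem wD_wDBar_zonalMonomial (j : Fin n) (z : Fin n → ℂ) :
    wD j (wDBar j (zonalMonomial η i s t)) z =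
      i * zonalMonomial η (i - 1) s t z
      + i * (i - 1 : ℕ) * zonalMonomial η (i - 1 - 1) s t z * (z j * conj (z j))
      + i * s * zonalMonomial η (i - 1) (s - 1) t z * (z j * conj (η j))
      + t * i * zonalMonomial η (i - 1) s (t - 1) z * (η j * conj (z j))
      + s * t * zonalMonomial η i (s - 1) (t - 1) z * (η j * conj (η j)) := by
  rw [(hasWirtinger_zonalMonomial η i s t).wDBar_eq j]
  have h := ((((hasWirtinger_const (i : ℂ)).mul (hasWirtinger_apply j)).mul
    (hasWirtinger_zonalMonomial η (i - 1) s t)).add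
    (((hasWirtinger_const (t : ℂ)).mul (hasWirtinger_const (η j))).mul
    (hasWirtinger_zonalMonomial η i s (t - 1))))
  rw [h.wD_eq j]
  simp only [if_true]
  ring

theorem cLap_zonalMonomial (z : Fin n → ℂ) :
    cLap (zonalMonomial η i s t) z =
      4 * (i * (n + i - 1 + s + t) * zonalMonomial η (i - 1) s t z
        + s * t * hermProd η η * zonalMonomial η i (s - 1) (t - 1) z) := by
  simp only [cLap, wD_wDBar_zonalMonomial, Finset.sum_add_distrib, ← Finset.mul_sum,
    Finset.sum_const, Finset.card_univ, Fintype.card_fin, nsmul_eq_mul]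
  have hpred : (i : ℂ) * ((i - 1 : ℕ) : ℂ) = i * (i - 1) := by cases i <;> simp
  simp only [← hermProd.eq_1, ← conj_hermProd z η]
  linear_combination (4 * i) * natCast_mul_hermProd_self_mul_zonalMonomial η (i - 1) s t z
    + 4 * i * natCast_mul_hermProd_mul_zonalMonomial η (i - 1) s t z
    + 4 * i * natCast_mul_conj_hermProd_mul_zonalMonomial η (i - 1) s t z
    + 4 * zonalMonomial η (i - 1) s t z * hpred

theorem differentiable_wDBar_zonalMonomial (j : Fin n) :
    Differentiable ℝ (wDBar j (zonalMonomial η i s t)) := by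
  have h1 := (hasWirtinger_zonalMonomial η (i - 1) s t).differentiable
  have h2 := (hasWirtinger_zonalMonomial η i s (t - 1)).differentiable
  rw [(hasWirtinger_zonalMonomial η i s t).wDBar_eq j]
  fun_prop

end

theorem ordinaryHypergeometricCoefficient_succ_mul {𝕂 : Type*} [Field 𝕂] [CharZero 𝕂]
    (a b c : 𝕂) (i : ℕ) (hc : (ascPochhammer 𝕂 (i + 1)).eval c ≠ 0) :
    ordinaryHypergeometricCoefficient a b c (i + 1) * ((i + 1) * (c + i)) =
      ordinaryHypergeometricCoefficient a b c i * ((a + i) * (b + i)) := by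
  rw [ascPochhammer_succ_eval, mul_ne_zero_iff] at hc
  have hi : (i + 1 : 𝕂) ≠ 0 := by exact_mod_cast i.succ_ne_zero
  simp only [ordinaryHypergeometricCoefficient, ascPochhammer_succ_eval, Nat.factorial_succ,
    Nat.cast_mul, Nat.cast_succ]
  field_simp [hc.1, hc.2, hi]

theorem ascPochhammer_eval_neg_natCast_ne_zero {R : Type*} [CommRing R] [IsDomain R]
    [CharZero R] {i k : ℕ} (h : i ≤ k) : (ascPochhammer R i).eval (-(k : R)) ≠ 0 := by
  rw [Ne, ascPochhammer_eval_eq_zero_iff]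
  rintro ⟨l, hl, hlk⟩
  rw [neg_neg] at hlk
  exact absurd (Nat.cast_injective hlk) (by omega)

theorem Finset.sum_range_succ_add_eq_zero {M : Type*} [AddCommMonoid M] (g h : ℕ → M) (m : ℕ)
    (hg : g 0 = 0) (hh : h m = 0) (hgh : ∀ i < m, g (i + 1) + h i = 0) :
    ∑ i ∈ Finset.range (m + 1), (g i + h i) = 0 := by
  rw [Finset.sum_add_distrib, Finset.sum_range_succ', Finset.sum_range_succ h, hg, hh,
    add_zero, add_zero, ← Finset.sum_add_distrib]
  exact Finset.sum_eq_zero fun i hi => hgh i (Finset.mem_range.mp hi)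

noncomputable def zonalCoeff (α a b i : ℕ) : ℝ :=
  ordinaryHypergeometricCoefficient (-(a : ℝ)) (-(b : ℝ)) (-(α : ℝ) - a - b) i

theorem zonalCoeff_succ_mul_add (α a b i : ℕ) (hi : i < α + a + b) :
    zonalCoeff α a b (i + 1) * ((i + 1) * (α + a + b - i)) +
      zonalCoeff α a b i * ((a - i) * (b - i)) = 0 := by
  have hc : (ascPochhammer ℝ (i + 1)).eval (-(α : ℝ) - a - b) ≠ 0 := by
    rw [show -(α : ℝ) - a - b = -((α + a + b : ℕ) : ℝ) by push_cast; ring]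
    exact ascPochhammer_eval_neg_natCast_ne_zero hi
  have h := ordinaryHypergeometricCoefficient_succ_mul (-(a : ℝ)) (-(b : ℝ)) _ i hc
  simp only [zonalCoeff]
  linear_combination -h

theorem cLap_sum_zonalMonomial (η : Fin n → ℂ) (c : ℕ → ℂ) (a b m : ℕ) (z : Fin n → ℂ) :
    cLap (fun w => ∑ i ∈ Finset.range (m + 1), c i * zonalMonomial η i (a - i) (b - i) w) z =
      4 * ∑ i ∈ Finset.range (m + 1),
        (c i * (i * (n + i - 1 + (a - i : ℕ) + (b - i : ℕ))) *
            zonalMonomial η (i - 1) (a - i) (b - i) z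
          + c i * ((a - i : ℕ) * (b - i : ℕ)) * hermProd η η *
            zonalMonomial η i (a - i - 1) (b - i - 1) z) := by
  rw [cLap_sum_const_mul _ c (fun i _ => (hasWirtinger_zonalMonomial η _ _ _).differentiable)
    (fun i _ j => differentiable_wDBar_zonalMonomial η _ _ _ j)]
  simp only [cLap_zonalMonomial, Finset.mul_sum]
  exact Finset.sum_congr rfl fun i _ => by ring

noncomputable def zonalPolynomial (α a b : ℕ) (η : Fin (α + 2) → ℂ) (z : Fin (α + 2) → ℂ) : ℂ :=
  ∑ i ∈ Finset.range (min a b + 1),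
    (zonalCoeff α a b i : ℂ) * zonalMonomial η i (a - i) (b - i) z

theorem cLap_zonalPolynomial (α a b : ℕ) (η : Fin (α + 2) → ℂ) (hη : hermProd η η = 1)
    (z : Fin (α + 2) → ℂ) : cLap (zonalPolynomial α a b η) z = 0 := by
  unfold zonalPolynomial
  rw [cLap_sum_zonalMonomial, hη]
  refine mul_eq_zero_of_right 4 ?_
  refine (Finset.sum_congr rfl fun i _ => by ring).trans (Finset.sum_range_succ_add_eq_zero
    (fun i => (zonalCoeff α a b i : ℂ) * (i * ((α + 2 : ℕ) + i - 1 + (a - i : ℕ) + (b - i : ℕ))) *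
      zonalMonomial η (i - 1) (a - i) (b - i) z)
    (fun i => (zonalCoeff α a b i : ℂ) * ((a - i : ℕ) * (b - i : ℕ)) *
      zonalMonomial η i (a - i - 1) (b - i - 1) z) _ (by simp) ?_ fun i hi => ?_)
  · obtain h | h : a - min a b = 0 ∨ b - min a b = 0 := by omega
    all_goals simp [h]
  · have hia : i < a := by omega
    have hib : i < b := by omega
    have h := congrArg Complex.ofReal (zonalCoeff_succ_mul_add α a b i (by omega))
    push_cast at h
    simp only [Nat.add_sub_cancel, Nat.sub_sub]
    push_cast [Nat.cast_sub hia, Nat.cast_sub hib, Nat.cast_sub hia.le, Nat.cast_sub hib.le]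
    linear_combination zonalMonomial η i (a - (i + 1)) (b - (i + 1)) z * h

/-- The solid zonal harmonic of bidegree (a,b) with pole η on ℂⁿ, n = α+2, is harmonic. -/
theorem zonal_polynomial_harmonic (α a b : ℕ) (η : Fin (α + 2) → ℂ)
    (hη : ∑ j, η j * (starRingEnd ℂ) (η j) = 1) (z : Fin (α + 2) → ℂ) :
    cLap (fun z : Fin (α + 2) → ℂ =>
      ∑ i ∈ Finset.range (min a b + 1),
        ((((ascPochhammer ℝ i).eval (-(a : ℝ)) * (ascPochhammer ℝ i).eval (-(b : ℝ))) /
            ((ascPochhammer ℝ i).eval (-(α : ℝ) - a - b) * (i.factorial : ℝ)) : ℝ) : ℂ) *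
          (∑ j, z j * (starRingEnd ℂ) (z j)) ^ i *
          (∑ j, z j * (starRingEnd ℂ) (η j)) ^ (a - i) *
          ((starRingEnd ℂ) (∑ j, z j * (starRingEnd ℂ) (η j))) ^ (b - i)) z = 0 := by
  convert cLap_zonalPolynomial α a b η hη z using 2
  funext w
  unfold zonalPolynomial
  refine Finset.sum_congr rfl fun i _ => ?_
  simp only [zonalCoeff, ordinaryHypergeometricCoefficient, zonalMonomial, hermProd]
  push_cast
  ring
end
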